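/- arXiv:1603.07490 — 3 statements merged into one kernel-verified Lean document; each statement's English description precedes it below -/
import Mathlib

section
/- Let X be a reflexive Banach space and Θ: X → (-∞, ∞] a proper, lower semi-continuous, p-convex function with constant c₀ > 0 (p ≥ 2). Suppose the conjugate Θ* is Fréchet differentiable with gradient ∇Θ*: X* → X satisfying |Θ*(η) - Θ*(ξ) - ⟨η - ξ, ∇Θ*(ξ)⟩| ≤ (1/(p*(2c₀)^{p*-1})) ‖ξ - η‖^{p*}, where 1/p + 1/p* = 1. If ξ ∈ ∂_ε Θ(x) for some ε ≥ 0, then for any η ∈ X* we have ⟨η, x - ∇Θ*(ξ)⟩ ≤ ε + (1/(p*(2c₀)^{p*-1})) ‖η‖^{p*}. -/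
/-!
If `ξ ∈ ∂_ε Θ(x)`, the ε-Fenchel–Young inequality gives `Θ*(ξ) + Θ(x) ≤ ⟨ξ, x⟩ + ε`, while
Fenchel–Young at `ξ + η` gives `⟨ξ + η, x⟩ ≤ Θ*(ξ + η) + Θ(x)`. The Hölder estimate for `∇Θ*`
bounds `Θ*(ξ + η)` by `Θ*(ξ) + ⟨η, ∇Θ*(ξ)⟩ + ‖η‖^{p*}/(p*(2c₀)^{p*-1})`; adding the three
inequalities cancels `Θ(x)` and `Θ*(ξ)`.
-/

section Conjugate

variable {X : Type*} [TopologicalSpace X] [AddCommGroup X] [Module ℝ X]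

noncomputable def fenchelConjugate (Θ : X → EReal) (ξ : X →L[ℝ] ℝ) : EReal :=
  ⨆ z : X, ((ξ z : ℝ) : EReal) - Θ z

def IsEpsSubgradient (Θ : X → EReal) (ε : ℝ) (x : X) (ξ : X →L[ℝ] ℝ) : Prop :=
  ∀ z : X, Θ x + ((ξ (z - x) - ε : ℝ) : EReal) ≤ Θ z

theorem coe_sub_le_fenchelConjugate (Θ : X → EReal) (ξ : X →L[ℝ] ℝ) (x : X) :
    ((ξ x : ℝ) : EReal) - Θ x ≤ fenchelConjugate Θ ξ :=
  le_iSup (fun z : X => ((ξ z : ℝ) : EReal) - Θ z) x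

theorem ne_bot_of_fenchelConjugate_ne_top {Θ : X → EReal} {ξ : X →L[ℝ] ℝ}
    (h : fenchelConjugate Θ ξ ≠ ⊤) (x : X) : Θ x ≠ ⊥ := by
  intro hx
  apply h
  simpa [hx, EReal.coe_sub_bot] using coe_sub_le_fenchelConjugate Θ ξ x

theorem IsEpsSubgradient.ne_top {Θ : X → EReal} {ε : ℝ} {x : X} {ξ : X →L[ℝ] ℝ}
    (hξ : IsEpsSubgradient Θ ε x ξ) (h : fenchelConjugate Θ ξ ≠ ⊥) : Θ x ≠ ⊤ := by
  intro hx
  have htop (z : X) : Θ z = ⊤ := by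
    have := hξ z
    rwa [hx, EReal.top_add_coe, top_le_iff] at this
  exact h (by simp [fenchelConjugate, htop, EReal.sub_top])

theorem IsEpsSubgradient.fenchelConjugate_le {Θ : X → EReal} {ε : ℝ} {x : X} {ξ : X →L[ℝ] ℝ}
    (hξ : IsEpsSubgradient Θ ε x ξ) (hx : Θ x ≠ ⊤) (hx' : Θ x ≠ ⊥) :
    fenchelConjugate Θ ξ ≤ ((ξ x - (Θ x).toReal + ε : ℝ) : EReal) := by
  refine iSup_le fun z => ?_
  have hz : (((Θ x).toReal + (ξ (z - x) - ε) : ℝ) : EReal) ≤ Θ z := by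
    rw [EReal.coe_add, EReal.coe_toReal hx hx']
    exact hξ z
  refine (EReal.sub_le_sub le_rfl hz).trans ?_
  rw [← EReal.coe_sub, EReal.coe_le_coe_iff, map_sub]
  linarith

end Conjugate

theorem stmt2_general
    {X : Type*} [NormedAddCommGroup X] [NormedSpace ℝ X]
    (Θ : X → EReal) (pstar c₀ ε : ℝ)
    -- the conjugate Θ* is everywhere finite, with value Θstar
    (Θstar : (X →L[ℝ] ℝ) → ℝ)
    (hconj : ∀ ζ : X →L[ℝ] ℝ, ((Θstar ζ : ℝ) : EReal) = ⨆ z : X, ((ζ z : ℝ) : EReal) - Θ z)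
    -- Θ* is Fréchet differentiable with gradient grad : X* → X
    (grad : (X →L[ℝ] ℝ) → X)
    (hgrad : ∀ ζ η : X →L[ℝ] ℝ,
      |Θstar η - Θstar ζ - (η - ζ) (grad ζ)|
        ≤ (1 / (pstar * (2 * c₀) ^ (pstar - 1))) * ‖ζ - η‖ ^ pstar)
    (x : X) (ξ : X →L[ℝ] ℝ)
    (hξ : ∀ z : X, Θ x + ((ξ (z - x) - ε : ℝ) : EReal) ≤ Θ z) :
    ∀ η : X →L[ℝ] ℝ,
      η (x - grad ξ) ≤ ε + (1 / (pstar * (2 * c₀) ^ (pstar - 1))) * ‖η‖ ^ pstar := by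
  intro η
  have hsub : IsEpsSubgradient Θ ε x ξ := hξ
  have hΘstar (ζ : X →L[ℝ] ℝ) : fenchelConjugate Θ ζ = Θstar ζ := (hconj ζ).symm
  have hx : Θ x ≠ ⊤ := hsub.ne_top (by simp [hΘstar])
  have hx' : Θ x ≠ ⊥ := ne_bot_of_fenchelConjugate_ne_top (ξ := ξ) (by simp [hΘstar]) x
  have hyoung_eps : Θstar ξ ≤ ξ x - (Θ x).toReal + ε := by
    have := hsub.fenchelConjugate_le hx hx'
    rwa [hΘstar, EReal.coe_le_coe_iff] at this
  have hyoung : (ξ + η) x - (Θ x).toReal ≤ Θstar (ξ + η) := by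
    have := coe_sub_le_fenchelConjugate Θ (ξ + η) x
    rwa [← EReal.coe_toReal hx hx', hΘstar, ← EReal.coe_sub, EReal.coe_le_coe_iff] at this
  have hholder := (abs_le.mp (hgrad ξ (ξ + η))).2
  rw [add_sub_cancel_left, sub_add_cancel_left, norm_neg] at hholder
  rw [map_sub]
  simp only [add_apply] at hyoung
  linarith

/-- Lemma 2.3, inequality (eq37): if ξ ∈ ∂_ε Θ(x) then
⟨η, x - ∇Θ*(ξ)⟩ ≤ ε + ‖η‖^{p*}/(p*(2c₀)^{p*-1}) for every η ∈ X*. -/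
theorem stmt2
    {X : Type*} [NormedAddCommGroup X] [NormedSpace ℝ X] [CompleteSpace X]
    -- reflexivity of X
    (hrefl : Function.Surjective (NormedSpace.inclusionInDoubleDual ℝ X))
    (Θ : X → EReal) (p pstar c₀ ε : ℝ)
    (hp : 2 ≤ p) (hpq : 1 / p + 1 / pstar = 1) (hc₀ : 0 < c₀) (hε : 0 ≤ ε)
    (hproper : ∃ z, Θ z ≠ ⊤) (hbot : ∀ z, Θ z ≠ ⊥)
    (hlsc : LowerSemicontinuous Θ)
    (hpconv : ∀ t : ℝ, t ∈ Set.Icc (0:ℝ) 1 → ∀ xb x : X,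
      Θ (t • xb + (1 - t) • x) + ((c₀ * t * (1 - t) * ‖xb - x‖ ^ p : ℝ) : EReal)
        ≤ (t : EReal) * Θ xb + ((1 - t : ℝ) : EReal) * Θ x)
    -- the conjugate Θ* is everywhere finite, with value Θstar
    (Θstar : (X →L[ℝ] ℝ) → ℝ)
    (hconj : ∀ ζ : X →L[ℝ] ℝ, ((Θstar ζ : ℝ) : EReal) = ⨆ z : X, ((ζ z : ℝ) : EReal) - Θ z)
    -- Θ* is Fréchet differentiable with gradient grad : X* → X
    (grad : (X →L[ℝ] ℝ) → X)
    (hdiff : ∀ ζ : X →L[ℝ] ℝ,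
      HasFDerivAt Θstar (NormedSpace.inclusionInDoubleDual ℝ X (grad ζ)) ζ)
    (hgrad : ∀ ζ η : X →L[ℝ] ℝ,
      |Θstar η - Θstar ζ - (η - ζ) (grad ζ)|
        ≤ (1 / (pstar * (2 * c₀) ^ (pstar - 1))) * ‖ζ - η‖ ^ pstar)
    (x : X) (ξ : X →L[ℝ] ℝ)
    (hξ : ∀ z : X, Θ x + ((ξ (z - x) - ε : ℝ) : EReal) ≤ Θ z) :
    ∀ η : X →L[ℝ] ℝ,
      η (x - grad ξ) ≤ ε + (1 / (pstar * (2 * c₀) ^ (pstar - 1))) * ‖η‖ ^ pstar :=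
  stmt2_general Θ pstar c₀ ε Θstar hconj grad hgrad x ξ hξ
end

section
/- For any real numbers a, b ≥ 0, t > 1 and β > 1, we have (a + b)^t ≤ β a^t + β (β^{1/(t-1)} - 1)^{1-t} b^t. -/
/-!
Write `a + b = θ • (a / θ) + (1 - θ) • (b / (1 - θ))` and apply convexity of `x ↦ x ^ t`.
Choosing `θ = β ^ (-1 / (t - 1))` turns the weights `θ ^ (1 - t)` and `(1 - θ) ^ (1 - t)`
into `β` and `β (β ^ (1 / (t - 1)) - 1) ^ (1 - t)`.
-/

open Real

lemma mul_rpow_div_self {θ : ℝ} (hθ : 0 < θ) (x p : ℝ) (hx : 0 ≤ x) :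
    θ * (x / θ) ^ p = θ ^ (1 - p) * x ^ p := by
  rw [div_rpow hx hθ.le, rpow_sub hθ, rpow_one]
  ring

theorem add_rpow_le_weighted {p θ : ℝ} (hp : 1 ≤ p) (hθ₀ : 0 < θ) (hθ₁ : θ < 1)
    {a b : ℝ} (ha : 0 ≤ a) (hb : 0 ≤ b) :
    (a + b) ^ p ≤ θ ^ (1 - p) * a ^ p + (1 - θ) ^ (1 - p) * b ^ p := by
  have hθ' : 0 < 1 - θ := sub_pos.2 hθ₁
  have hconv := (convexOn_rpow hp).2 (Set.mem_Ici.2 (div_nonneg ha hθ₀.le))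
    (Set.mem_Ici.2 (div_nonneg hb hθ'.le)) hθ₀.le hθ'.le (add_sub_cancel θ 1)
  simp only [smul_eq_mul, mul_div_cancel₀ _ hθ₀.ne', mul_div_cancel₀ _ hθ'.ne'] at hconv
  rwa [mul_rpow_div_self hθ₀ a p ha, mul_rpow_div_self hθ' b p hb] at hconv

/-- (a + b)^t ≤ β a^t + β (β^{1/(t-1)} - 1)^{1-t} b^t for a, b ≥ 0, t > 1, β > 1. -/
theorem stmt4 (a b t β : ℝ) (ha : 0 ≤ a) (hb : 0 ≤ b) (ht : 1 < t) (hβ : 1 < β) :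
    (a + b) ^ t ≤ β * a ^ t + β * (β ^ (1 / (t - 1)) - 1) ^ (1 - t) * b ^ t := by
  set c := β ^ (1 / (t - 1)) with hc
  have hc₁ : 1 < c := one_lt_rpow hβ (one_div_pos.2 (sub_pos.2 ht))
  have hc₀ : 0 < c := by linarith
  have hcβ : c ^ (t - 1) = β := by
    rw [hc, ← rpow_mul (by linarith), one_div_mul_cancel (by linarith), rpow_one]
  have hc_inv : c⁻¹ ^ (1 - t) = β := by
    rw [inv_rpow hc₀.le, ← rpow_neg hc₀.le, neg_sub, hcβ]
  have hc_compl : (1 - c⁻¹) ^ (1 - t) = β * (c - 1) ^ (1 - t) := by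
    rw [show 1 - c⁻¹ = (c - 1) * c⁻¹ by field_simp, mul_rpow (by linarith) (by positivity),
      hc_inv, mul_comm]
  have key := add_rpow_le_weighted (p := t) ht.le (inv_pos.2 hc₀) (inv_lt_one_of_one_lt₀ hc₁) ha hb
  rwa [hc_inv, hc_compl] at key
end

section
/- Let p ≥ 2, s > 1, β > 1, σ > 0, ε ≥ 0 and r ≥ 0 be real numbers. Define μ = μ̃ (r^p + σε)^{1 - s/p} for some μ̃ ≥ 0. If p ≥ s, then μ r^s ≥ μ (r^p + σε)^{s/p} - μ̃ σε. If p < s, then μ r^s ≥ (1/β) μ (r^p + σε)^{s/p} - (β^{p/(s-p)} - 1)^{(p-s)/p} μ̃ σε. -/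
/-!
Write `A = r ^ p + σ ε` and `t = s / p`, so that `μ = μ̃ A ^ (1 - t)` and `μ A ^ t = μ̃ A`.
If `t ≤ 1`, the factor `A ^ (1 - t)` is at least `(r ^ p) ^ (1 - t)`, which gives `μ r ^ s ≥ μ̃ r ^ p`.
If `t > 1`, convexity of `x ↦ x ^ t` with weights `γ⁻¹, 1 - γ⁻¹`, where `γ ^ (t - 1) = β`, splits
`A ^ t` into `β r ^ s + β K (σ ε) ^ t`; the last term costs at most `μ̃ σ ε` after multiplying by
`μ / β`, because `A ^ (1 - t) (σ ε) ^ t ≤ σ ε` when `σ ε ≤ A`.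
-/

open Real

namespace Real

lemma add_rpow_le_rpow_one_sub_mul_add {a b l t : ℝ} (ha : 0 ≤ a) (hb : 0 ≤ b) (hl : 0 < l)
    (hl1 : l < 1) (ht : 1 ≤ t) :
    (a + b) ^ t ≤ l ^ (1 - t) * a ^ t + (1 - l) ^ (1 - t) * b ^ t := by
  have hl' : 0 < 1 - l := sub_pos.2 hl1
  have hconv := (convexOn_rpow ht).2 (Set.mem_Ici.2 (div_nonneg ha hl.le))
    (Set.mem_Ici.2 (div_nonneg hb hl'.le)) hl.le hl'.le (add_sub_cancel l 1)
  have hmean : l • (a / l) + (1 - l) • (b / (1 - l)) = a + b := by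
    simp only [smul_eq_mul]
    field_simp
  have hweight {w x : ℝ} (hw : 0 < w) (hx : 0 ≤ x) : w • (x / w) ^ t = w ^ (1 - t) * x ^ t := by
    rw [smul_eq_mul, div_rpow hx hw.le, rpow_sub hw, rpow_one]
    field_simp
  rwa [hmean, hweight hl ha, hweight hl' hb] at hconv

lemma add_rpow_le_mul_rpow_add {a b t β : ℝ} (ha : 0 ≤ a) (hb : 0 ≤ b) (ht : 1 < t)
    (hβ : 1 < β) :
    (a + b) ^ t ≤ β * a ^ t + β * (β ^ (1 / (t - 1)) - 1) ^ (1 - t) * b ^ t := by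
  set γ := β ^ (1 / (t - 1))
  have hβ0 : 0 < β := zero_lt_one.trans hβ
  have hγ1 : 1 < γ := one_lt_rpow hβ (by have := sub_pos.2 ht; positivity)
  have hγ0 : 0 < γ := zero_lt_one.trans hγ1
  have hγinv : γ⁻¹ ^ (1 - t) = β := by
    rw [inv_rpow hγ0.le, ← rpow_neg hγ0.le, neg_sub, ← rpow_mul hβ0.le,
      one_div_mul_cancel (sub_pos.2 ht).ne', rpow_one]
  have hγcompl : (1 - γ⁻¹) ^ (1 - t) = β * (γ - 1) ^ (1 - t) := by
    rw [show 1 - γ⁻¹ = (γ - 1) * γ⁻¹ by field_simp, mul_rpow (sub_pos.2 hγ1).le (by positivity),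
      hγinv, mul_comm]
  simpa only [hγinv, hγcompl] using
    add_rpow_le_rpow_one_sub_mul_add ha hb (inv_pos.2 hγ0) (inv_lt_one_of_one_lt₀ hγ1) ht.le

lemma rpow_one_sub_mul_rpow_le {a b t : ℝ} (hb : 0 ≤ b) (hba : b ≤ a) (ht : 1 ≤ t) :
    a ^ (1 - t) * b ^ t ≤ b := by
  rcases hb.eq_or_lt with rfl | hb
  · rw [zero_rpow (by linarith), mul_zero]
  calc a ^ (1 - t) * b ^ t ≤ b ^ (1 - t) * b ^ t :=
        mul_le_mul_of_nonneg_right (rpow_le_rpow_of_nonpos hb hba (by linarith)) (by positivity)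
    _ = b := by rw [← rpow_add hb, sub_add_cancel, rpow_one]

end Real

section StepSize

variable {p s β b r μt : ℝ}

lemma step_size_bound_of_le (hp : 0 < p) (hsp : s ≤ p) (hb : 0 ≤ b) (hr : 0 ≤ r)
    (hμt : 0 ≤ μt) :
    μt * (r ^ p + b) ^ (1 - s / p) * (r ^ p + b) ^ (s / p) - μt * b
      ≤ μt * (r ^ p + b) ^ (1 - s / p) * r ^ s := by
  have hrp : 0 ≤ r ^ p := rpow_nonneg hr p
  have hexp : 0 ≤ 1 - s / p := sub_nonneg.2 ((div_le_one hp).2 hsp)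
  have hsplit : r ^ p = (r ^ p) ^ (1 - s / p) * r ^ s := by
    rw [← rpow_mul hr, mul_one_sub, mul_div_cancel₀ s hp.ne', ← rpow_add' hr (by simpa using hp.ne'),
      sub_add_cancel]
  calc μt * (r ^ p + b) ^ (1 - s / p) * (r ^ p + b) ^ (s / p) - μt * b
      = μt * ((r ^ p) ^ (1 - s / p) * r ^ s) := by
        rw [mul_assoc, ← rpow_add' (by positivity) (by simp), sub_add_cancel, rpow_one, ← hsplit]
        ring
    _ ≤ μt * (r ^ p + b) ^ (1 - s / p) * r ^ s := by
        rw [mul_assoc]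
        gcongr
        linarith

lemma step_size_bound_of_lt (hp : 0 < p) (hps : p < s) (hβ : 1 < β) (hb : 0 ≤ b) (hr : 0 ≤ r)
    (hμt : 0 ≤ μt) :
    1 / β * (μt * (r ^ p + b) ^ (1 - s / p)) * (r ^ p + b) ^ (s / p)
        - (β ^ (p / (s - p)) - 1) ^ ((p - s) / p) * μt * b
      ≤ μt * (r ^ p + b) ^ (1 - s / p) * r ^ s := by
  set t := s / p
  set A := r ^ p + b
  set K := (β ^ (p / (s - p)) - 1) ^ ((p - s) / p)
  have ht : 1 < t := (one_lt_div hp).2 hps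
  have hK : K = (β ^ (1 / (t - 1)) - 1) ^ (1 - t) := by
    rw [div_sub_one hp.ne', one_div_div, one_sub_div hp.ne']
  have hrt : (r ^ p) ^ t = r ^ s := by rw [← rpow_mul hr, mul_div_cancel₀ s hp.ne']
  have hsplit : A ^ t ≤ β * r ^ s + β * K * b ^ t := by
    simpa only [hK, hrt] using add_rpow_le_mul_rpow_add (rpow_nonneg hr p) hb ht hβ
  have hK0 : 0 ≤ K := rpow_nonneg (sub_nonneg.2 (one_le_rpow hβ.le (by
    have := sub_pos.2 hps; positivity))) _
  have htail : A ^ (1 - t) * b ^ t ≤ b :=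
    rpow_one_sub_mul_rpow_le hb (le_add_of_nonneg_left (rpow_nonneg hr p)) ht.le
  have hβ0 : 0 < β := zero_lt_one.trans hβ
  have hμ0 : 0 ≤ μt * A ^ (1 - t) := mul_nonneg hμt (rpow_nonneg (by positivity) _)
  calc 1 / β * (μt * A ^ (1 - t)) * A ^ t - K * μt * b
      ≤ 1 / β * (μt * A ^ (1 - t)) * (β * r ^ s + β * K * b ^ t) - K * μt * b := by
        gcongr
    _ = μt * A ^ (1 - t) * r ^ s - K * μt * (b - A ^ (1 - t) * b ^ t) := by
        field_simp
        ring
    _ ≤ μt * A ^ (1 - t) * r ^ s := by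
        have := sub_nonneg.2 htail
        have := mul_nonneg (mul_nonneg hK0 hμt) this
        linarith

end StepSize

theorem stmt10_general (p s β σ ε r μt μ : ℝ)
    (hp : 2 ≤ p) (hβ : 1 < β) (hσ : 0 < σ) (hε : 0 ≤ ε)
    (hr : 0 ≤ r) (hμt : 0 ≤ μt)
    (hμ : μ = μt * (r ^ p + σ * ε) ^ (1 - s / p)) :
    (s ≤ p → μ * (r ^ p + σ * ε) ^ (s / p) - μt * σ * ε ≤ μ * r ^ s) ∧
    (p < s → (1 / β) * μ * (r ^ p + σ * ε) ^ (s / p)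
        - (β ^ (p / (s - p)) - 1) ^ ((p - s) / p) * μt * σ * ε ≤ μ * r ^ s) := by
  have hp0 : 0 < p := by linarith
  have hσε : 0 ≤ σ * ε := mul_nonneg hσ.le hε
  subst hμ
  refine ⟨fun hsp => ?_, fun hps => ?_⟩
  · simpa only [mul_assoc] using step_size_bound_of_le hp0 hsp hσε hr hμt
  · simpa only [mul_assoc] using step_size_bound_of_lt hp0 hps hβ hσε hr hμt

/-- The step-size inequality (eq:16.1.15) of the paper, in both cases p ≥ s and p < s. -/
theorem stmt10 (p s β σ ε r μt μ : ℝ)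
    (hp : 2 ≤ p) (hs : 1 < s) (hβ : 1 < β) (hσ : 0 < σ) (hε : 0 ≤ ε)
    (hr : 0 ≤ r) (hμt : 0 ≤ μt)
    (hμ : μ = μt * (r ^ p + σ * ε) ^ (1 - s / p)) :
    (s ≤ p → μ * (r ^ p + σ * ε) ^ (s / p) - μt * σ * ε ≤ μ * r ^ s) ∧
    (p < s → (1 / β) * μ * (r ^ p + σ * ε) ^ (s / p)
        - (β ^ (p / (s - p)) - 1) ^ ((p - s) / p) * μt * σ * ε ≤ μ * r ^ s) :=
  stmt10_general p s β σ ε r μt μ hp hβ hσ hε hr hμt hμ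
end
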